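/- In the setting of the previous computation with c₁ = ln λ₁, c₂ = ln λ₂ and λ₁λ₂ = 1, λ₁ ≠ 1, the mean curvature vector of the flow spanned by E₃ is τ = (ln λ₂)E₁, and its transverse divergence is div^Q τ = (ln λ₂)Γ₁₁¹ + (ln λ₂)Γ₂₁² = −(ln λ₂)(ln λ₁) = (ln λ₁)² > 0. -/

import Mathlib

open scoped RealInnerProductSpace

/-!
With `[E₂,E₃] = 0` and `E₃ ⟂ E₁, E₂`, the only structure constants feeding `Γ₃₃ᵏ`, `Γ₁₁¹` and
`Γ₂₁²` are `C₁₃³ = ln λ₂` and `C₂₁² = -ln λ₁`, so `τ = (ln λ₂) E₁` and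
`div^Q τ = -(ln λ₂)(ln λ₁)`; then `λ₂ = λ₁⁻¹` turns this into `(ln λ₁)²`, which is positive
because `λ₁ ≠ 1`.
-/

theorem bracket_self_eq_zero_of_antisymm {V : Type*} [AddCommGroup V] [IsAddTorsionFree V]
    {bracket : V → V → V} (hanti : ∀ X Y, bracket X Y = -bracket Y X) (X : V) :
    bracket X X = 0 :=
  self_eq_neg.mp (hanti X X)

section Christoffel

variable {ι : Type*} {C Γ : ι → ι → ι → ℝ}

theorem christoffel_diag_eq (hΓ : ∀ i j k, Γ i j k = (C i j k + C k i j + C k j i) / 2)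
    (hC : ∀ i k, C i i k = 0) (j k : ι) : Γ j j k = C k j j := by
  rw [hΓ, hC]; ring

theorem christoffel_outer_eq (hΓ : ∀ i j k, Γ i j k = (C i j k + C k i j + C k j i) / 2)
    (hC : ∀ i k, C i i k = 0) (i j : ι) : Γ i j i = C i j i := by
  rw [hΓ, hC]; ring

end Christoffel

theorem stmt_12_general {V : Type*} [NormedAddCommGroup V] [InnerProductSpace ℝ V]
    (E : Fin 3 → V) (hE : Orthonormal ℝ E)
    (bracket : V → V → V) (hanti : ∀ X Y, bracket X Y = -bracket Y X)
    (l₁ l₂ : ℝ) (h₁ : 0 < l₁) (hmul : l₁ * l₂ = 1) (hne : l₁ ≠ 1)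
    (h₁₂ : bracket (E 0) (E 1) = Real.log l₁ • E 1)
    (h₁₃ : bracket (E 0) (E 2) = Real.log l₂ • E 2)
    (h₂₃ : bracket (E 1) (E 2) = 0)
    (C : Fin 3 → Fin 3 → Fin 3 → ℝ)
    (hC : ∀ i j k, C i j k = ⟪bracket (E i) (E j), E k⟫)
    (Γ : Fin 3 → Fin 3 → Fin 3 → ℝ)
    (hΓ : ∀ i j k, Γ i j k = (C i j k + C k i j + C k j i) / 2)
    (τ : V) (hτ : τ = Γ 2 2 0 • E 0 + Γ 2 2 1 • E 1) :
    τ = Real.log l₂ • E 0 ∧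
    Real.log l₂ * Γ 0 0 0 + Real.log l₂ * Γ 1 0 1 = -(Real.log l₂ * Real.log l₁) ∧
    -(Real.log l₂ * Real.log l₁) = (Real.log l₁) ^ 2 ∧
    0 < (Real.log l₁) ^ 2 := by
  have : IsAddTorsionFree V := .of_isTorsionFree ℝ V
  have hCself : ∀ i k, C i i k = 0 := fun i k => by
    rw [hC, bracket_self_eq_zero_of_antisymm hanti, inner_zero_left]
  have hE_self : ∀ j, ⟪E j, E j⟫ = 1 := fun j => by
    rw [real_inner_self_eq_norm_sq, hE.1 j, one_pow]
  have hC022 : C 0 2 2 = Real.log l₂ := by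
    rw [hC, h₁₃, real_inner_smul_left, hE_self, mul_one]
  have hC122 : C 1 2 2 = 0 := by rw [hC, h₂₃, inner_zero_left]
  have hC101 : C 1 0 1 = -Real.log l₁ := by
    rw [hC, hanti, h₁₂, inner_neg_left, real_inner_smul_left, hE_self, mul_one]
  have hlog : Real.log l₂ = -Real.log l₁ := by
    rw [eq_inv_of_mul_eq_one_right hmul, Real.log_inv]
  refine ⟨?_, ?_, ?_, sq_pos_of_ne_zero (Real.log_ne_zero_of_pos_of_ne_one h₁ hne)⟩
  · rw [hτ, christoffel_diag_eq hΓ hCself, christoffel_diag_eq hΓ hCself, hC022, hC122,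
      zero_smul, add_zero]
  · rw [christoffel_outer_eq hΓ hCself, christoffel_outer_eq hΓ hCself, hCself, hC101]
    ring
  · rw [hlog]; ring

/-- In the Lie-algebra setting of the `T³_A` example, with `c₁ = ln λ₁`, `c₂ = ln λ₂`,
`λ₁λ₂ = 1`, `λ₁ ≠ 1` and structure constants `[E₁,E₂] = (ln λ₁)E₂`,
`[E₁,E₃] = (ln λ₂)E₃`, `[E₂,E₃] = 0`, the mean curvature vector of the flow spanned by
`E₃` is `τ = Γ₃₃¹E₁ + Γ₃₃²E₂ = (ln λ₂)E₁`, and its transverse divergence is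
`div^Q τ = (ln λ₂)Γ₁₁¹ + (ln λ₂)Γ₂₁² = −(ln λ₂)(ln λ₁) = (ln λ₁)² > 0`. -/
theorem stmt_12 {V : Type*} [NormedAddCommGroup V] [InnerProductSpace ℝ V]
    (E : Fin 3 → V) (hE : Orthonormal ℝ E) (hbasis : Submodule.span ℝ (Set.range E) = ⊤)
    (bracket : V → V → V) (hanti : ∀ X Y, bracket X Y = -bracket Y X)
    (l₁ l₂ : ℝ) (h₁ : 0 < l₁) (h₂ : 0 < l₂) (hmul : l₁ * l₂ = 1) (hne : l₁ ≠ 1)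
    (h₁₂ : bracket (E 0) (E 1) = Real.log l₁ • E 1)
    (h₁₃ : bracket (E 0) (E 2) = Real.log l₂ • E 2)
    (h₂₃ : bracket (E 1) (E 2) = 0)
    (C : Fin 3 → Fin 3 → Fin 3 → ℝ)
    (hC : ∀ i j k, C i j k = ⟪bracket (E i) (E j), E k⟫)
    (Γ : Fin 3 → Fin 3 → Fin 3 → ℝ)
    (hΓ : ∀ i j k, Γ i j k = (C i j k + C k i j + C k j i) / 2)
    (τ : V) (hτ : τ = Γ 2 2 0 • E 0 + Γ 2 2 1 • E 1) :
    τ = Real.log l₂ • E 0 ∧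
    Real.log l₂ * Γ 0 0 0 + Real.log l₂ * Γ 1 0 1 = -(Real.log l₂ * Real.log l₁) ∧
    -(Real.log l₂ * Real.log l₁) = (Real.log l₁) ^ 2 ∧
    0 < (Real.log l₁) ^ 2 :=
  stmt_12_general E hE bracket hanti l₁ l₂ h₁ hmul hne h₁₂ h₁₃ h₂₃ C hC Γ hΓ τ hτ
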